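/- The region R_MS^1 = {z ∈ ℂ : ∫₀¹ |1 + z + z²/2 + (t²/2) z³|² dt < 1} is not convex: the points z₁ = 0.01 + i and z₂ = 0.01 − i lie in R_MS^1, but their midpoint 0.01 does not. -/

import Mathlib

open MeasureTheory Finset

noncomputable def fT (r : ℕ) (z : ℂ) (t : ℝ) : ℂ :=
  (∑ j ∈ Finset.range (r + 2), z ^ j / (j.factorial : ℂ)) +
    (t : ℂ) ^ (r + 1) * z ^ (r + 2) / ((r + 1).factorial : ℂ)

noncomputable def Fms (r : ℕ) (z : ℂ) : ℝ :=
  ∫ t in (0:ℝ)..1, (‖fT r z t‖) ^ 2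

noncomputable def Gas (r : ℕ) (z : ℂ) : ℝ :=
  ∫ t in (0:ℝ)..1, Real.log (‖fT r z t‖)

/-!
Since `fT r (conj z) t = conj (fT r z t)`, the region `{z | Fms r z < 1}` is symmetric about the
real axis, and for real `x ≥ 0` every term of `fT r x t` is nonnegative with constant term `1`, so
`Fms r x ≥ 1`. Hence `z₂ = conj z₁` lies in the region together with `z₁`, while their midpoint
`Re z₁ = 0.01` does not. Membership of `z₁` is an exact computation: for `r = 1` the integrand is
`‖a + t² b‖²`, whose integral over `[0, 1]` is `‖a‖² + (2/3) Re (a b̄) + ‖b‖² / 5`.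
-/

open ComplexConjugate

lemma continuous_fT (r : ℕ) (z : ℂ) : Continuous (fT r z) := by
  unfold fT
  fun_prop

lemma fT_conj (r : ℕ) (z : ℂ) (t : ℝ) : fT r (conj z) t = conj (fT r z t) := by
  simp [fT, map_sum]

lemma Fms_conj (r : ℕ) (z : ℂ) : Fms r (conj z) = Fms r z := by
  simp only [Fms, fT_conj, Complex.norm_conj]

lemma fT_ofReal (r : ℕ) (x t : ℝ) :
    fT r x t = ((∑ j ∈ range (r + 2), x ^ j / j.factorial +
      t ^ (r + 1) * x ^ (r + 2) / (r + 1).factorial : ℝ) : ℂ) := by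
  push_cast [fT]
  rfl

lemma one_le_norm_fT_ofReal {r : ℕ} {x t : ℝ} (hx : 0 ≤ x) (ht : 0 ≤ t) : 1 ≤ ‖fT r x t‖ := by
  rw [fT_ofReal, Complex.norm_real, Real.norm_eq_abs]
  refine le_trans ?_ (le_abs_self _)
  have hsum : 1 ≤ ∑ j ∈ range (r + 2), x ^ j / j.factorial := by
    simpa using single_le_sum (f := fun j ↦ x ^ j / (j.factorial : ℝ))
      (fun j _ ↦ by positivity) (mem_range.2 (Nat.succ_pos (r + 1)))
  have hlast : 0 ≤ t ^ (r + 1) * x ^ (r + 2) / (r + 1).factorial := by positivity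
  linarith

lemma one_le_Fms_ofReal (r : ℕ) {x : ℝ} (hx : 0 ≤ x) : 1 ≤ Fms r x := by
  have h := intervalIntegral.integral_mono_on (μ := volume) zero_le_one intervalIntegrable_const
    (((continuous_fT r x).norm.pow 2).intervalIntegrable 0 1)
    (fun t ht ↦ one_le_pow₀ (n := 2) (one_le_norm_fT_ofReal hx ht.1))
  simpa [Fms] using h

lemma integral_norm_add_sq_mul_sq (a b : ℂ) :
    ∫ t in (0:ℝ)..1, ‖a + (t : ℂ) ^ 2 * b‖ ^ 2 =
      Complex.normSq a + 2 / 3 * (a * conj b).re + Complex.normSq b / 5 := by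
  have h (t : ℝ) : ‖a + (t : ℂ) ^ 2 * b‖ ^ 2 =
      Complex.normSq a + 2 * (a * conj b).re * t ^ 2 + Complex.normSq b * t ^ 4 := by
    rw [Complex.sq_norm, Complex.normSq_add, Complex.normSq_mul, map_mul, ← Complex.ofReal_pow,
      Complex.conj_ofReal, Complex.normSq_ofReal, mul_left_comm, Complex.re_ofReal_mul]
    ring
  have hi {f : ℝ → ℝ} (hf : Continuous f) : IntervalIntegrable f volume 0 1 :=
    hf.intervalIntegrable 0 1
  simp only [h]
  rw [intervalIntegral.integral_add (hi (by fun_prop)) (hi (by fun_prop)),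
    intervalIntegral.integral_add (hi (by fun_prop)) (hi (by fun_prop))]
  simp only [intervalIntegral.integral_const, intervalIntegral.integral_const_mul, integral_pow]
  norm_num
  ring

lemma fT_one (z : ℂ) (t : ℝ) :
    fT 1 z t = (1 + z + z ^ 2 / 2) + (t : ℂ) ^ 2 * (z ^ 3 / 2) := by
  simp [fT, sum_range_succ, Nat.factorial]
  ring

lemma Fms_one (z : ℂ) :
    Fms 1 z = Complex.normSq (1 + z + z ^ 2 / 2)
      + 2 / 3 * ((1 + z + z ^ 2 / 2) * conj (z ^ 3 / 2)).re + Complex.normSq (z ^ 3 / 2) / 5 := by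
  simp only [Fms, fT_one, integral_norm_add_sq_mul_sq]

lemma not_convex_of_mem_of_conj_mem {S : Set ℂ} {z : ℂ} (hz : z ∈ S) (hz' : conj z ∈ S)
    (hre : (z.re : ℂ) ∉ S) : ¬ Convex ℝ S := by
  intro hS
  refine hre ?_
  convert hS hz hz' (a := 1 / 2) (b := 1 / 2) (by norm_num) (by norm_num) (by norm_num) using 1
  rw [Complex.re_eq_add_conj, Complex.real_smul, Complex.real_smul]
  push_cast
  ring

theorem stmt17 :
    (1 / 100 + Complex.I) ∈ {z : ℂ | Fms 1 z < 1} ∧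
    (1 / 100 - Complex.I) ∈ {z : ℂ | Fms 1 z < 1} ∧
    ((1 : ℂ) / 100) ∉ {z : ℂ | Fms 1 z < 1} ∧
    ¬ Convex ℝ {z : ℂ | Fms 1 z < 1} := by
  have hconj : conj (1 / 100 + Complex.I) = 1 / 100 - Complex.I := by
    simp [map_ofNat, sub_eq_add_neg]
  have hre : (((1 / 100 + Complex.I).re : ℝ) : ℂ) = 1 / 100 := by norm_num
  have h₁ : Fms 1 (1 / 100 + Complex.I) < 1 := by
    rw [Fms_one]
    norm_num [Complex.normSq_apply, pow_succ, map_ofNat]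
  have h₂ : Fms 1 (1 / 100 - Complex.I) < 1 := by
    rwa [← hconj, Fms_conj]
  have h₃ : ¬ Fms 1 (1 / 100) < 1 :=
    not_lt.2 (by simpa using one_le_Fms_ofReal 1 (x := 1 / 100) (by norm_num))
  refine ⟨h₁, h₂, h₃, not_convex_of_mem_of_conj_mem h₁ ?_ ?_⟩
  · rwa [Set.mem_ofPred_eq, hconj]
  · rwa [hre]
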